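/- A subset e' of Δ belongs to 𝔖^⊥ if and only if there are finitely many simple terms s₁,…,sₙ such that e' ⊆ ↑s₁ ∪ ⋯ ∪ ↑sₙ. -/

import Mathlib

inductive RT : Type
  | var : ℕ → RT
  | lam : ℕ → RT → RT
  | app : RT → List RT → RT

noncomputable instance : DecidableEq RT := Classical.decEq _

namespace Resource

mutual
def size : RT → ℕ
  | .var _ => 1
  | .lam _ s => 1 + size s
  | .app s S => 1 + size s + sizeP S
def sizeP : List RT → ℕ
  | [] => 0
  | t :: T => size t + sizeP T
end

mutual
def fv : RT → Finset ℕ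
  | .var x => {x}
  | .lam x s => (fv s).erase x
  | .app s S => fv s ∪ fvP S
def fvP : List RT → Finset ℕ
  | [] => ∅
  | t :: T => fv t ∪ fvP T
end

mutual
def fc : RT → ℕ → ℕ
  | .var y, x => if y = x then 1 else 0
  | .lam y s, x => if y = x then 0 else fc s x
  | .app s S, x => fc s x + fcP S x
def fcP : List RT → ℕ → ℕ
  | [], _ => 0
  | t :: T, x => fc t x + fcP T x
end

mutual
def subst : RT → ℕ → RT → RT
  | .var y, x, t => if y = x then t else .var y
  | .lam y s, x, t => if y = x then .lam y s else .lam y (subst s x t)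
  | .app s S, x, t => .app (subst s x t) (substP S x t)
def substP : List RT → ℕ → RT → List RT
  | [], _, _ => []
  | u :: T, x, t => subst u x t :: substP T x t
end

def splits : List RT → List (List RT × List RT)
  | [] => [([], [])]
  | a :: l => (splits l).flatMap fun p => [(a :: p.1, p.2), (p.1, a :: p.2)]

mutual
def dsubst : RT → ℕ → List RT → Multiset RT
  | .var y, x, S =>
      if y = x then (match S with | [t] => {t} | _ => 0)
      else if S.isEmpty then {RT.var y} else 0
  | .lam y s, x, S =>
      if y = x then (if S.isEmpty then {RT.lam y s} else 0)
      else (dsubst s x S).map (RT.lam y)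
  | .app s T, x, S =>
      ((splits S).map fun p =>
        (dsubst s x p.1).bind fun s' =>
          (dsubstP T x p.2).map fun T' => RT.app s' T').sum
def dsubstP : List RT → ℕ → List RT → Multiset (List RT)
  | [], _, S => if S.isEmpty then {([] : List RT)} else 0
  | t :: T, x, S =>
      ((splits S).map fun p =>
        (dsubst t x p.1).bind fun t' =>
          (dsubstP T x p.2).map fun T' => t' :: T').sum
end

mutual
inductive Red1 : RT → Multiset RT → Prop
  | beta (x : ℕ) (s : RT) (S : List RT) : Red1 (.app (.lam x s) S) (dsubst s x S)
  | lam (x : ℕ) {s : RT} {a : Multiset RT} : Red1 s a → Red1 (.lam x s) (a.map (RT.lam x))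
  | appL {s : RT} {a : Multiset RT} (S : List RT) :
      Red1 s a → Red1 (.app s S) (a.map fun u => RT.app u S)
  | appR (s : RT) {S : List RT} {A : Multiset (List RT)} :
      Red1P S A → Red1 (.app s S) (A.map fun T => RT.app s T)
inductive Red1P : List RT → Multiset (List RT) → Prop
  | head {t : RT} {b : Multiset RT} (T : List RT) :
      Red1 t b → Red1P (t :: T) (b.map fun u => u :: T)
  | tail (t : RT) {T : List RT} {B : Multiset (List RT)} :
      Red1P T B → Red1P (t :: T) (B.map fun T' => t :: T')
end

def NLift {α β : Type*} (ρ : α → Multiset β → Prop) (a : Multiset α) (b : Multiset β) : Prop :=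
  ∃ l : List (α × Multiset β), (∀ p ∈ l, ρ p.1 p.2) ∧
    a = (l.map Prod.fst : List α) ∧ b = (l.map Prod.snd).sum

def Red1R (s : RT) (b : Multiset RT) : Prop := b = {s} ∨ Red1 s b

def Red : Multiset RT → Multiset RT → Prop := Relation.TransGen (NLift Red1R)

def rle (t s : RT) : Prop := ∃ a, Red {s} a ∧ t ∈ a

def above (s : RT) : Set RT := {t | rle s t}

def Red1RP (S : List RT) (B : Multiset (List RT)) : Prop := B = {S} ∨ Red1P S B

def RedP : Multiset (List RT) → Multiset (List RT) → Prop := Relation.TransGen (NLift Red1RP)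

def plep (T S : List RT) : Prop := ∃ A, RedP {S} A ∧ T ∈ A





def orth {I : Type*} (F : Set (Set I)) : Set (Set I) := {e' | ∀ e ∈ F, (e ∩ e').Finite}

structure FinSpace (I : Type*) where
  F : Set (Set I)
  biorth : orth (orth F) ⊆ F

lemma subset_biorth {I : Type*} (G : Set (Set I)) : G ⊆ orth (orth G) := by
  intro e he g hg
  have := hg e he
  rwa [Set.inter_comm] at this

lemma orth_anti {I : Type*} {G H : Set (Set I)} (h : G ⊆ H) : orth H ⊆ orth G :=
  fun g hg e he => hg e (h he)

def FinSpace.ofOrth {I : Type*} (G : Set (Set I)) : FinSpace I :=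
  ⟨orth G, orth_anti (subset_biorth G)⟩

lemma FinSpace.empty_mem {I : Type*} (X : FinSpace I) : ∅ ∈ X.F :=
  X.biorth (fun g _ => by simp)

lemma FinSpace.mem_of_subset {I : Type*} (X : FinSpace I) {e f : Set I}
    (he : e ∈ X.F) (h : f ⊆ e) : f ∈ X.F := by
  refine X.biorth (fun g hg => ?_)
  exact ((hg e he).subset (fun x hx => ⟨h hx.2, hx.1⟩))

lemma FinSpace.union_mem {I : Type*} (X : FinSpace I) {e f : Set I}
    (he : e ∈ X.F) (hf : f ∈ X.F) : e ∪ f ∈ X.F := by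
  refine X.biorth (fun g hg => ?_)
  have h1 := hg e he
  have h2 := hg f hf
  rw [Set.inter_comm] at h1 h2
  rw [Set.inter_union_distrib_left]
  exact h1.union h2

def fsSub (k : Type*) [Field k] {I : Type*} (X : FinSpace I) : Submodule k (I → k) where
  carrier := {a | {s | a s ≠ 0} ∈ X.F}
  add_mem' := by
    intro a b ha hb
    refine X.mem_of_subset (X.union_mem ha hb) ?_
    intro s hs
    by_contra h
    simp only [Set.mem_union, Set.mem_setOf_eq, not_or, not_not] at h
    exact hs (by simp [Pi.add_apply, h.1, h.2])
  zero_mem' := by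
    refine X.mem_of_subset X.empty_mem ?_
    intro s hs
    simp at hs
  smul_mem' := by
    intro c a ha
    refine X.mem_of_subset ha ?_
    intro s hs
    by_contra h
    simp only [Set.mem_setOf_eq, not_not] at h
    exact hs (by simp [Pi.smul_apply, h])

def fsTop (k : Type*) [Field k] {I : Type*} (X : FinSpace I) :
    TopologicalSpace (fsSub k X) where
  IsOpen U := ∀ a ∈ U, ∃ e' ∈ orth X.F, ∀ b : fsSub k X, (∀ s ∈ e', b.1 s = a.1 s) → b ∈ U
  isOpen_univ := by
    intro a _
    exact ⟨∅, fun e _ => by simp, fun b _ => trivial⟩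
  isOpen_inter := by
    rintro U V hU hV a ⟨haU, haV⟩
    obtain ⟨e₁, he₁, h₁⟩ := hU a haU
    obtain ⟨e₂, he₂, h₂⟩ := hV a haV
    refine ⟨e₁ ∪ e₂, fun e he => ?_, fun b hb => ?_⟩
    · rw [Set.inter_union_distrib_left]
      exact (he₁ e he).union (he₂ e he)
    · exact ⟨h₁ b (fun s hs => hb s (Or.inl hs)), h₂ b (fun s hs => hb s (Or.inr hs))⟩
  isOpen_sUnion := by
    rintro 𝒮 h a ⟨U, hU, haU⟩
    obtain ⟨e', he', hb⟩ := h U hU a haU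
    exact ⟨e', he', fun b hbs => ⟨U, hU, hb b hbs⟩⟩



def Sfin : Set (Set RT) := orth (Set.range above)

def SfinSpace : FinSpace RT := FinSpace.ofOrth (Set.range above)

def SS : Set (Set RT) := {e' | ∀ ξ : Finset ℕ, {s ∈ e' | fv s ⊆ ξ}.Finite}

def Sfv : Set (Set RT) := orth (Set.range above ∪ SS)

def bang (e : Set RT) : Set (List RT) := {S | ∀ t ∈ S, t ∈ e}

def appSet (g : Set RT) (E : Set (List RT)) : Set RT :=
  {u | ∃ t ∈ g, ∃ S ∈ E, u = RT.app t S}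

def lamSet (x : ℕ) (g : Set RT) : Set RT := {u | ∃ s ∈ g, u = RT.lam x s}

def appMany (g : Set RT) (Es : List (Set (List RT))) : Set RT := Es.foldl appSet g

def dsubstSet (g : Set RT) (x : ℕ) (E : Set (List RT)) : Set RT :=
  {t | ∃ s ∈ g, ∃ S ∈ E, t ∈ dsubst s x S}

def IsDFS (W : Set RT) (F : Set (Set RT)) : Prop :=
  (∀ e ∈ F, e ⊆ W) ∧ ∀ e : Set RT, e ⊆ W → e ∈ orth (orth F) → e ∈ F

def SaturatedP (W : Set RT) (F : Set (Set RT)) : Prop :=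
  (∀ (x : ℕ) (es : List (Set RT)), (∀ e ∈ es, e ∈ Sfv) →
      appMany {RT.var x} (es.map bang) ∈ F) ∧
  F ⊆ Sfv ∧
  (∀ (x : ℕ) (g e : Set RT) (es : List (Set RT)), g ∈ Sfv → e ∈ Sfv →
      (∀ e' ∈ es, e' ∈ Sfv) →
      appMany (dsubstSet g x (bang e)) (es.map bang) ∈ F →
      appMany (appSet (lamSet x g) (bang e)) (es.map bang) ∈ F)

abbrev FP := Set RT × Set (Set RT)

def SatFP (X : FP) : Prop := IsDFS X.1 X.2 ∧ SaturatedP X.1 X.2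

def implWeb (FX FY : Set (Set RT)) : Set RT :=
  {t | ∀ e ∈ FX, appSet {t} (bang e) ∈ FY}

def implF (FX FY : Set (Set RT)) : Set (Set RT) :=
  {g | g ⊆ implWeb FX FY ∧ ∀ e ∈ FX, appSet g (bang e) ∈ FY}

def implFP (X Y : FP) : FP := (implWeb X.2 Y.2, implF X.2 Y.2)

def preimpl (e : Set RT) (f' : Set RT) : Set RT :=
  {t | (appSet {t} (bang e) ∩ f').Nonempty}

def pdsubstSet (f : Set RT) (l : List (ℕ × Set (List RT))) : Set RT :=
  l.foldl (fun g p => dsubstSet g p.1 p.2) f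

inductive ALam (k : Type) : Type
  | var : ℕ → ALam k
  | lam : ℕ → ALam k → ALam k
  | app : ALam k → List (k × ALam k) → ALam k

variable {k : Type} [Field k]

mutual
def taylor : ALam k → RT → k
  | .var x, .var y => if x = y then 1 else 0
  | .var _, _ => 0
  | .lam x M, .lam y s => if x = y then taylor M s else 0
  | .lam _ _, _ => 0
  | .app M Q, .app t T =>
      taylor M t * ((Nat.factorial T.length : ℕ) : k)⁻¹ * (T.map fun u => taylorQ Q u).prod
  | .app _ _, _ => 0
def taylorQ : List (k × ALam k) → RT → k
  | [], _ => 0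
  | (α, N) :: Q, u => α * taylor N u + taylorQ Q u
end

mutual
inductive InShape : ALam k → RT → Prop
  | var (x : ℕ) : InShape (.var x) (.var x)
  | lam (x : ℕ) {M : ALam k} {s : RT} : InShape M s → InShape (.lam x M) (.lam x s)
  | app {M : ALam k} {Q : List (k × ALam k)} {s : RT} {T : List RT} :
      InShape M s → (∀ u ∈ T, InShapeQ Q u) →
      InShape (.app M Q) (.app s T)
inductive InShapeQ : List (k × ALam k) → RT → Prop
  | head {α : k} {N : ALam k} (Q : List (k × ALam k)) {u : RT} :
      InShape N u → InShapeQ ((α, N) :: Q) u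
  | tail (p : k × ALam k) {Q : List (k × ALam k)} {u : RT} :
      InShapeQ Q u → InShapeQ (p :: Q) u
end

inductive Ty : Type
  | var : ℕ → Ty
  | arrow : Ty → Ty → Ty
  | all : ℕ → Ty → Ty

def tyFV : Ty → Finset ℕ
  | .var φ => {φ}
  | .arrow A B => tyFV A ∪ tyFV B
  | .all φ A => (tyFV A).erase φ

def substTy : Ty → ℕ → Ty → Ty
  | .var ψ, φ, B => if ψ = φ then B else .var ψ
  | .arrow A C, φ, B => .arrow (substTy A φ B) (substTy C φ B)
  | .all ψ A, φ, B => if ψ = φ then .all ψ A else .all ψ (substTy A φ B)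

inductive HasTy : List (ℕ × Ty) → ALam k → Ty → Prop
  | var (Γ : List (ℕ × Ty)) (x : ℕ) (A : Ty) :
      List.lookup x Γ = some A → HasTy Γ (.var x) A
  | abs {Γ : List (ℕ × Ty)} {x : ℕ} {M : ALam k} {A B : Ty} :
      HasTy ((x, A) :: Γ) M B → HasTy Γ (.lam x M) (.arrow A B)
  | app {Γ : List (ℕ × Ty)} {M : ALam k} {Q : List (k × ALam k)} {A B : Ty} :
      HasTy Γ M (.arrow A B) → (∀ p ∈ Q, HasTy Γ p.2 A) → HasTy Γ (.app M Q) B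
  | inst {Γ : List (ℕ × Ty)} {M : ALam k} {φ : ℕ} {A : Ty} (B : Ty) :
      HasTy Γ M (.all φ A) → HasTy Γ M (substTy A φ B)
  | gen {Γ : List (ℕ × Ty)} {M : ALam k} {φ : ℕ} {A : Ty} :
      HasTy Γ M A → (∀ p ∈ Γ, φ ∉ tyFV p.2) → HasTy Γ M (.all φ A)



def interp (I : ℕ → FP) : Ty → FP
  | .var φ => I φ
  | .arrow A B => implFP (interp I A) (interp I B)
  | .all φ A =>
      (⋂ (X : FP) (_ : SatFP X), (interp (Function.update I φ X) A).1,
       {e | (e ⊆ ⋂ (X : FP) (_ : SatFP X), (interp (Function.update I φ X) A).1) ∧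
            ∀ X : FP, SatFP X → e ∈ (interp (Function.update I φ X) A).2})

/-! The relation `≤` is reflexive and every term has only finitely many terms below it, since
reduction does not increase `weight`. For any such relation, the biorthogonal of the family of
up-sets consists exactly of the sets covered by finitely many up-sets. -/

theorem _root_.Multiset.mem_list_sum {α : Type*} {l : List (Multiset α)} {a : α} :
    a ∈ l.sum ↔ ∃ m ∈ l, a ∈ m := by
  induction l with
  | nil => simp
  | cons m l ih => simp [ih]

theorem NLift.exists_of_mem {α β : Type*} {ρ : α → Multiset β → Prop} {a : Multiset α}
    {b : Multiset β} (h : NLift ρ a b) {y : β} (hy : y ∈ b) : ∃ x ∈ a, ∃ c, ρ x c ∧ y ∈ c := by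
  obtain ⟨l, hl, rfl, rfl⟩ := h
  obtain ⟨c, hc, hyc⟩ := Multiset.mem_list_sum.mp hy
  obtain ⟨p, hp, rfl⟩ := List.mem_map.mp hc
  exact ⟨p.1, Multiset.mem_coe.mpr (List.mem_map_of_mem hp), p.2, hl p hp, hyc⟩

section Orthogonality

variable {I : Type*} {r : I → I → Prop}

theorem mem_orth_orth_of_subset_biUnion {F : Set (Set I)} {e' : Set I} {L : Finset I}
    {u : I → Set I} (hu : ∀ s ∈ L, u s ∈ F) (he' : e' ⊆ ⋃ s ∈ L, u s) : e' ∈ orth (orth F) := by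
  intro e he
  refine (L.finite_toSet.biUnion fun s hs => he (u s) (hu s hs)).subset fun t ht => ?_
  obtain ⟨s, hs, hts⟩ := Set.mem_iUnion₂.mp (he' ht.2)
  exact Set.mem_iUnion₂.mpr ⟨s, hs, hts, ht.1⟩

/-- If `e'` is not covered by finitely many up-sets, a greedy choice yields an infinite sequence
in `e'` whose elements pairwise have no common lower bound; its range meets every up-set in at most
one point. -/
theorem exists_finset_of_mem_orth_orth (hrefl : ∀ t, r t t) (hfin : ∀ t, {s | r s t}.Finite)
    {e' : Set I} (he' : e' ∈ orth (orth (Set.range fun s => {t | r s t}))) :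
    ∃ L : Finset I, e' ⊆ ⋃ s ∈ L, {t | r s t} := by
  by_contra! hcover
  let Apart : I → I → Prop := fun x y => ∀ s, r s x → ¬ r s y
  have : Std.Symm Apart := ⟨fun x y h s hy hx => h s hx hy⟩
  obtain ⟨f, hfe', hf⟩ := exists_seq_of_forall_finset_exists' (· ∈ e') Apart fun L _ => by
    have hdown : (⋃ x ∈ L, {s | r s x}).Finite := L.finite_toSet.biUnion fun x _ => hfin x
    obtain ⟨y, hy, hy'⟩ := Set.not_subset.mp (hcover hdown.toFinset)
    refine ⟨y, hy, fun x hx s hsx hsy => hy' (Set.mem_iUnion₂.mpr ⟨s, ?_, hsy⟩)⟩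
    exact hdown.mem_toFinset.mpr (Set.mem_iUnion₂.mpr ⟨x, hx, hsx⟩)
  have hinj : Function.Injective f := fun m n hmn => by
    by_contra hne
    exact hf hne (f m) (hrefl _) (hmn ▸ hrefl _)
  have hrange : Set.range f ∈ orth (Set.range fun s => {t | r s t}) := by
    rintro _ ⟨s, rfl⟩
    refine Set.Subsingleton.finite ?_
    rintro _ ⟨hsm, m, rfl⟩ _ ⟨hsn, n, rfl⟩
    by_contra hne
    exact hf (fun h => hne (congrArg f h)) s hsm hsn
  refine Set.infinite_range_of_injective hinj ((he' _ hrange).subset ?_)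
  rintro _ ⟨n, rfl⟩
  exact ⟨⟨n, rfl⟩, hfe' n⟩

end Orthogonality

mutual
/-- Counts the nodes of a term and the names of its variables (bound ones included): reduction
does not increase it, and only finitely many terms lie below any bound. -/
def weight : RT → ℕ
  | .var x => x + 1
  | .lam x s => x + 1 + weight s
  | .app s S => 1 + weight s + weightP S
def weightP : List RT → ℕ
  | [] => 0
  | t :: T => weight t + weightP T
end

theorem weightP_add_of_mem_splits {S : List RT} {p : List RT × List RT} (hp : p ∈ splits S) :
    weightP p.1 + weightP p.2 = weightP S := by
  induction S generalizing p with
  | nil => simp_all [splits, weightP]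
  | cons a S ih =>
    simp only [splits, List.mem_flatMap, List.mem_cons, List.not_mem_nil, or_false] at hp
    obtain ⟨q, hq, rfl | rfl⟩ := hp <;> simp only [weightP] <;> have := ih hq <;> omega

mutual
theorem weight_le_of_mem_dsubst : ∀ (s : RT) (x : ℕ) (S : List RT) (u : RT),
    u ∈ dsubst s x S → weight u ≤ weight s + weightP S
  | .var y, x, S, u, hu => by
    unfold dsubst at hu
    split_ifs at hu with hyx hS
    · match S, hu with
      | [t], hu => simp_all [weight, weightP]
    · simp_all [weight]
    · simp at hu
  | .lam y s, x, S, u, hu => by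
    unfold dsubst at hu
    split_ifs at hu with hyx hS
    · simp_all [weight]
    · simp at hu
    · obtain ⟨v, hv, rfl⟩ := Multiset.mem_map.mp hu
      have := weight_le_of_mem_dsubst s x S v hv
      simp only [weight]
      omega
  | .app s T, x, S, u, hu => by
    unfold dsubst at hu
    obtain ⟨_, hm, hum⟩ := Multiset.mem_list_sum.mp hu
    obtain ⟨p, hp, rfl⟩ := List.mem_map.mp hm
    obtain ⟨s', hs', hum⟩ := Multiset.mem_bind.mp hum
    obtain ⟨T', hT', rfl⟩ := Multiset.mem_map.mp hum
    have := weight_le_of_mem_dsubst s x p.1 s' hs'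
    have := weightP_le_of_mem_dsubstP T x p.2 T' hT'
    have := weightP_add_of_mem_splits hp
    simp only [weight]
    omega
theorem weightP_le_of_mem_dsubstP : ∀ (T : List RT) (x : ℕ) (S U : List RT),
    U ∈ dsubstP T x S → weightP U ≤ weightP T + weightP S
  | [], x, S, U, hU => by
    unfold dsubstP at hU
    split_ifs at hU with hS
    · simp_all [weightP]
    · simp at hU
  | t :: T, x, S, U, hU => by
    unfold dsubstP at hU
    obtain ⟨_, hm, hUm⟩ := Multiset.mem_list_sum.mp hU
    obtain ⟨p, hp, rfl⟩ := List.mem_map.mp hm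
    obtain ⟨t', ht', hUm⟩ := Multiset.mem_bind.mp hUm
    obtain ⟨T', hT', rfl⟩ := Multiset.mem_map.mp hUm
    have := weight_le_of_mem_dsubst t x p.1 t' ht'
    have := weightP_le_of_mem_dsubstP T x p.2 T' hT'
    have := weightP_add_of_mem_splits hp
    simp only [weightP]
    omega
end

theorem weight_le_of_red1 {t : RT} {a : Multiset RT} (h : Red1 t a) :
    ∀ u ∈ a, weight u ≤ weight t := by
  induction h using Red1.rec
    (motive_2 := fun T A _ => ∀ U ∈ A, weightP U ≤ weightP T) with
  | beta x s S =>
    intro u hu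
    have := weight_le_of_mem_dsubst s x S u hu
    simp only [weight]
    omega
  | lam x _ ih | appL S _ ih | appR s _ ih =>
    intro u hu
    obtain ⟨v, hv, rfl⟩ := Multiset.mem_map.mp hu
    have := ih v hv
    simp only [weight]
    omega
  | head T _ ih | tail t _ ih =>
    rename_i hU
    obtain ⟨v, hv, rfl⟩ := Multiset.mem_map.mp hU
    have := ih v hv
    simp only [weightP]
    omega

theorem weight_le_of_red1R {t : RT} {a : Multiset RT} (h : Red1R t a) :
    ∀ u ∈ a, weight u ≤ weight t := by
  rcases h with rfl | h
  · simp
  · exact weight_le_of_red1 h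

theorem exists_weight_ge_of_red {a b : Multiset RT} (h : Red a b) :
    ∀ u ∈ b, ∃ v ∈ a, weight u ≤ weight v := by
  have step {a b : Multiset RT} (h : NLift Red1R a b) : ∀ u ∈ b, ∃ v ∈ a, weight u ≤ weight v :=
    fun u hu => by
      obtain ⟨v, hv, c, hvc, huc⟩ := h.exists_of_mem hu
      exact ⟨v, hv, weight_le_of_red1R hvc u huc⟩
  induction h with
  | single h => exact step h
  | tail _ h ih =>
    intro u hu
    obtain ⟨v, hv, huv⟩ := step h u hu
    obtain ⟨w, hw, hvw⟩ := ih v hv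
    exact ⟨w, hw, huv.trans hvw⟩

theorem weight_le_of_rle {s t : RT} (h : rle s t) : weight s ≤ weight t := by
  obtain ⟨a, hred, hs⟩ := h
  obtain ⟨v, hv, hsv⟩ := exists_weight_ge_of_red hred s hs
  rwa [Multiset.mem_singleton.mp hv] at hsv

theorem rle_refl (t : RT) : rle t t :=
  ⟨{t}, .single ⟨[(t, {t})], by simp [Red1R], by simp, by simp⟩, Multiset.mem_singleton_self t⟩

theorem finite_setOf_weight_le (n : ℕ) :
    {u : RT | weight u ≤ n}.Finite ∧ {T : List RT | weightP T ≤ n}.Finite := by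
  induction n with
  | zero =>
    refine ⟨Set.finite_empty.subset fun u hu => ?_,
      (Set.finite_singleton []).subset fun T hT => ?_⟩
    · cases u <;> simp [weight] at hu
    · cases T with
      | nil => rfl
      | cons t T => cases t <;> simp [weightP, weight] at hT
  | succ n ih =>
    have hterms : {u : RT | weight u ≤ n + 1}.Finite := by
      refine ((((Set.finite_le_nat n).image RT.var).union
        (((Set.finite_le_nat n).prod ih.1).image fun p => RT.lam p.1 p.2)).union
        ((ih.1.prod ih.2).image fun p => RT.app p.1 p.2)).subset fun u hu => ?_
      cases u with
      | var x => exact .inl (.inl ⟨x, by simp_all [weight], rfl⟩)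
      | lam x s => exact .inl (.inr ⟨(x, s), by simp [weight] at hu ⊢; omega, rfl⟩)
      | app s S => exact .inr ⟨(s, S), by simp [weight] at hu ⊢; omega, rfl⟩
    refine ⟨hterms,
      ((hterms.prod ih.2).image fun p => p.1 :: p.2).insert [] |>.subset fun T hT => ?_⟩
    cases T with
    | nil => exact .inl rfl
    | cons t T =>
      refine .inr ⟨(t, T), ?_, rfl⟩
      cases t <;> simp [weightP, weight] at hT ⊢ <;> omega

theorem finite_setOf_rle (t : RT) : {s | rle s t}.Finite :=
  (finite_setOf_weight_le (weight t)).1.subset fun _ => weight_le_of_rle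

theorem statement8 (e' : Set RT) :
    e' ∈ orth Sfin ↔ ∃ L : Finset RT, e' ⊆ ⋃ s ∈ L, above s :=
  ⟨exists_finset_of_mem_orth_orth rle_refl finite_setOf_rle,
    fun ⟨_, hL⟩ => mem_orth_orth_of_subset_biUnion (fun s _ => ⟨s, rfl⟩) hL⟩

end Resource
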